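/- Let A be a finite-dimensional quasi-hereditary algebra over an infinite perfect field. If (rad_Δ^∞)² = 0 on ℱ(Δ), then ℱ(Δ) has only finitely many isomorphism classes of indecomposable objects. -/

import Mathlib

open CategoryTheory

variable {A : Type} [Ring A]

def Indec (X : ModuleCat.{0} A) : Prop :=
  (¬ Subsingleton X) ∧ ∀ e : X ⟶ X, e ≫ e = e → e = 0 ∨ e = 𝟙 X

def Summand (D M : ModuleCat.{0} A) : Prop :=
  ∃ (i : D ⟶ M) (r : M ⟶ D), i ≫ r = 𝟙 D

inductive InAdd (C : Set (ModuleCat.{0} A)) : ModuleCat.{0} A → Prop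
  | base : ∀ {M}, M ∈ C → InAdd C M
  | prod : ∀ {M N : ModuleCat.{0} A}, InAdd C M → InAdd C N →
      InAdd C (ModuleCat.of A (M × N))
  | summand : ∀ {D M}, InAdd C M → Summand D M → InAdd C D

def relRad (C : Set (ModuleCat.{0} A)) (M N : ModuleCat.{0} A) : Set (M ⟶ N) :=
  {f | ∀ X : ModuleCat.{0} A, InAdd C X → Indec X →
    ∀ (g : X ⟶ M) (h : N ⟶ X), ¬ IsIso (g ≫ f ≫ h)}

def radPow (C : Set (ModuleCat.{0} A)) : ℕ → ∀ M N : ModuleCat.{0} A, AddSubgroup (M ⟶ N)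
  | 0, _, _ => ⊤
  | m+1, M, N => AddSubgroup.closure
      {f | ∃ (L : ModuleCat.{0} A) (g : M ⟶ L) (h : L ⟶ N),
        g ∈ radPow C m M L ∧ h ∈ relRad C L N ∧ f = g ≫ h}

def radInf (C : Set (ModuleCat.{0} A)) (M N : ModuleCat.{0} A) : AddSubgroup (M ⟶ N) :=
  ⨅ n : ℕ, radPow C (n+1) M N

def SplitProjIn (C : Set (ModuleCat.{0} A)) (N : ModuleCat.{0} A) : Prop :=
  ∀ M : ModuleCat.{0} A, InAdd C M → ∀ f : M ⟶ N, Epi f → ∃ s : N ⟶ M, s ≫ f = 𝟙 N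

def SplitInjIn (C : Set (ModuleCat.{0} A)) (N : ModuleCat.{0} A) : Prop :=
  ∀ M : ModuleCat.{0} A, InAdd C M → ∀ f : N ⟶ M, Mono f → ∃ r : M ⟶ N, f ≫ r = 𝟙 N

def P0set (C : Set (ModuleCat.{0} A)) : Set (ModuleCat.{0} A) :=
  {N | N ∈ C ∧ Indec N ∧ SplitProjIn C N}

def I0set (C : Set (ModuleCat.{0} A)) : Set (ModuleCat.{0} A) :=
  {N | N ∈ C ∧ Indec N ∧ SplitInjIn C N}

def pRest (C : Set (ModuleCat.{0} A)) : ℕ → Set (ModuleCat.{0} A)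
  | 0 => C
  | k+1 => {M | M ∈ pRest C k ∧ ∀ D ∈ P0set (pRest C k), ¬ Summand D M}

def iRest (C : Set (ModuleCat.{0} A)) : ℕ → Set (ModuleCat.{0} A)
  | 0 => C
  | k+1 => {M | M ∈ iRest C k ∧ ∀ D ∈ I0set (iRest C k), ¬ Summand D M}

def Ppart (C : Set (ModuleCat.{0} A)) (k : ℕ) : Set (ModuleCat.{0} A) := P0set (pRest C k)

def Ipart (C : Set (ModuleCat.{0} A)) (k : ℕ) : Set (ModuleCat.{0} A) := I0set (iRest C k)

def Pinf (C : Set (ModuleCat.{0} A)) : Set (ModuleCat.{0} A) :=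
  {M | M ∈ C ∧ Indec M ∧ ∀ k, M ∉ Ppart C k}

def Iinf (C : Set (ModuleCat.{0} A)) : Set (ModuleCat.{0} A) :=
  {M | M ∈ C ∧ Indec M ∧ ∀ k, M ∉ Ipart C k}

def IsCover (D C : Set (ModuleCat.{0} A)) : Prop :=
  ∀ X ∈ C, ∃ Y : ModuleCat.{0} A, InAdd D Y ∧ ∃ f : Y ⟶ X, Epi f

def IsCocover (D C : Set (ModuleCat.{0} A)) : Prop :=
  ∀ X ∈ C, ∃ Y : ModuleCat.{0} A, InAdd D Y ∧ ∃ f : X ⟶ Y, Mono f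

def Resolving (C : Set (ModuleCat.{0} A)) : Prop :=
  (∀ P : ModuleCat.{0} A, Module.Finite A P → Projective P → Indec P → P ∈ C) ∧
  (∀ (X Y Z : ModuleCat.{0} A) (f : X ⟶ Y) (g : Y ⟶ Z), Mono f → Epi g →
      Function.Exact f g → X ∈ C → Z ∈ C → Y ∈ C) ∧
  (∀ (X Y Z : ModuleCat.{0} A) (f : X ⟶ Y) (g : Y ⟶ Z), Mono f → Epi g →
      Function.Exact f g → Y ∈ C → Z ∈ C → X ∈ C)

def Coresolving (C : Set (ModuleCat.{0} A)) : Prop :=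
  (∀ I : ModuleCat.{0} A, Module.Finite A I → Injective I → Indec I → I ∈ C) ∧
  (∀ (X Y Z : ModuleCat.{0} A) (f : X ⟶ Y) (g : Y ⟶ Z), Mono f → Epi g →
      Function.Exact f g → X ∈ C → Z ∈ C → Y ∈ C) ∧
  (∀ (X Y Z : ModuleCat.{0} A) (f : X ⟶ Y) (g : Y ⟶ Z), Mono f → Epi g →
      Function.Exact f g → X ∈ C → Y ∈ C → Z ∈ C)

def CovariantlyFinite (C : Set (ModuleCat.{0} A)) : Prop :=
  ∀ D : ModuleCat.{0} A, Module.Finite A D → ∃ C' : ModuleCat.{0} A, InAdd C C' ∧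
    ∃ f : D ⟶ C', ∀ X ∈ C, ∀ g : D ⟶ X, ∃ h : C' ⟶ X, f ≫ h = g

def ContravariantlyFinite (C : Set (ModuleCat.{0} A)) : Prop :=
  ∀ D : ModuleCat.{0} A, Module.Finite A D → ∃ C' : ModuleCat.{0} A, InAdd C C' ∧
    ∃ f : C' ⟶ D, ∀ X ∈ C, ∀ g : X ⟶ D, ∃ h : X ⟶ C', h ≫ f = g

def FinRep (S : Set (ModuleCat.{0} A)) : Prop :=
  ∃ (ι : Type) (_ : Finite ι) (rep : ι → ModuleCat.{0} A),
    ∀ M ∈ S, ∃ i, Nonempty (M ≅ rep i)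

def IsProjCover {P S : ModuleCat.{0} A} (π : P ⟶ S) : Prop :=
  Projective P ∧ Epi π ∧ ∀ (Q : ModuleCat.{0} A) (g : Q ⟶ P), Epi (g ≫ π) → Epi g

def IsInjEnv {S I : ModuleCat.{0} A} (ι : S ⟶ I) : Prop :=
  Injective I ∧ Mono ι ∧ ∀ (Q : ModuleCat.{0} A) (g : I ⟶ Q), Mono (ι ≫ g) → Mono g

def modfg (A : Type) [Ring A] : Set (ModuleCat.{0} A) := {X | Module.Finite A X}

def HasDeltaFiltration {A : Type} [Ring A] {n : ℕ} (Δ : Fin n → ModuleCat.{0} A)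
    (M : ModuleCat.{0} A) : Prop :=
  ∃ (s : ℕ) (c : Fin (s+1) → Submodule A M),
    Monotone c ∧ c 0 = ⊥ ∧ c (Fin.last s) = ⊤ ∧
    ∀ i : Fin s, ∃ j : Fin n,
      Nonempty ((↥(c i.succ) ⧸ Submodule.comap (c i.succ).subtype (c i.castSucc))
          ≃ₗ[A] ↥(Δ j))

def FDelta {A : Type} [Ring A] {n : ℕ} (Δ : Fin n → ModuleCat.{0} A) :
    Set (ModuleCat.{0} A) :=
  {M | Module.Finite A M ∧ HasDeltaFiltration Δ M}

/-!
If `ℱ(Δ)` were infinite, Zeng's theorem would give an indecomposable `M` that is neither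
postprojective nor preinjective. As `M` survives every step of the postprojective partition, it
is covered by epimorphisms lying in arbitrarily high powers of the radical; an epimorphism
`P → M` from a free module `P`, which lies in the resolving category `ℱ(Δ)`, factors through
all of them, so it lies in `rad^∞`, and since `(rad^∞)² = 0`, `rad^∞(M, -) = 0`. Hom spaces
are finite-dimensional, so on `Hom(M, I)` the radical filtration reaches `rad^∞ = 0` at a
finite stage, uniformly over the finitely many preinjectives `I` of level `0`, say at `m`.
Dually `M` survives every step of the preinjective partition, so it embeds into a sum of
level-`0` preinjectives by a monomorphism in `rad^m`, which must then vanish: impossible for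
`M ≠ 0`.
-/

section Summands

variable {X Y Z D : ModuleCat.{0} A}

lemma Indec.id_ne_zero (hX : Indec X) : 𝟙 X ≠ 0 := fun h =>
  hX.1 (ModuleCat.isZero_iff_subsingleton.mp ((Limits.IsZero.iff_id_eq_zero X).mpr h))

lemma Indec.not_mono_zero (hX : Indec X) : ¬ Mono (0 : X ⟶ Y) := fun _ =>
  hX.id_ne_zero (Limits.zero_of_comp_mono (0 : X ⟶ Y) (Category.id_comp 0))

lemma Summand.of_iso (e : X ≅ Y) : Summand X Y := ⟨e.hom, e.inv, e.hom_inv_id⟩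

lemma Summand.trans (hXY : Summand X Y) (hYZ : Summand Y Z) : Summand X Z := by
  obtain ⟨i, r, hir⟩ := hXY
  obtain ⟨i', r', hir'⟩ := hYZ
  exact ⟨i ≫ i', r' ≫ r, by simp [reassoc_of% hir', hir]⟩

lemma Summand.of_isIso_comp (g : X ⟶ Y) (h : Y ⟶ X) [IsIso (g ≫ h)] : Summand X Y :=
  ⟨g, h ≫ inv (g ≫ h), by rw [← Category.assoc, IsIso.hom_inv_id]⟩

lemma Indec.nonempty_iso_of_summand (hX : Indec X) (hD : Indec D) (h : Summand X D) :
    Nonempty (X ≅ D) := by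
  obtain ⟨i, r, hir⟩ := h
  rcases hD.2 (r ≫ i) (by rw [Category.assoc, reassoc_of% hir]) with h0 | h1
  · have hid : 𝟙 X = i ≫ (r ≫ i) ≫ r := by rw [Category.assoc, reassoc_of% hir, hir]
    exact (hX.id_ne_zero (by simpa [h0] using hid)).elim
  · exact ⟨⟨i, r, hir, h1⟩⟩

lemma Indec.summand_of_common_summand (hD : Indec D) (hX : Indec X) (hXD : Summand X D)
    (hXY : Summand X Y) : Summand D Y :=
  let ⟨e⟩ := hX.nonempty_iso_of_summand hD hXD
  (Summand.of_iso e.symm).trans hXY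

end Summands

section Radical

variable {C : Set (ModuleCat.{0} A)} {M N L : ModuleCat.{0} A}

lemma mem_relRad_of_forall_summand (f : M ⟶ N)
    (h : ∀ X : ModuleCat.{0} A, Indec X → Summand X M → Summand X N → False) :
    f ∈ relRad C M N := by
  intro X _ hX g k hiso
  refine h X hX (Summand.of_isIso_comp g (f ≫ k)) ?_
  rw [← Category.assoc] at hiso
  exact Summand.of_isIso_comp (g ≫ f) k

lemma mem_radPow_succ_of {m : ℕ} {g : M ⟶ L} {h : L ⟶ N} (hg : g ∈ radPow C m M L)
    (hh : h ∈ relRad C L N) : g ≫ h ∈ radPow C (m + 1) M N :=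
  AddSubgroup.subset_closure ⟨L, g, h, hg, hh, rfl⟩

lemma relRad_comp_mem {f : M ⟶ N} (hf : f ∈ relRad C M N) (b : N ⟶ L) :
    f ≫ b ∈ relRad C M L := by
  intro X hX hXi g h hiso
  exact hf X hX hXi g (b ≫ h) (by simpa only [Category.assoc] using hiso)

lemma radPow_succ_induction {m : ℕ} {P : (M ⟶ N) → Prop}
    (hcomp : ∀ (L : ModuleCat.{0} A) (g : M ⟶ L) (h : L ⟶ N),
      g ∈ radPow C m M L → h ∈ relRad C L N → P (g ≫ h))
    (hzero : P 0) (hadd : ∀ f f', P f → P f' → P (f + f')) (hneg : ∀ f, P f → P (-f))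
    {f : M ⟶ N} (hf : f ∈ radPow C (m + 1) M N) : P f := by
  refine AddSubgroup.closure_induction ?_ hzero (fun f f' _ _ => hadd f f') (fun f _ => hneg f) hf
  rintro _ ⟨L, g, h, hg, hh, rfl⟩
  exact hcomp L g h hg hh

lemma radPow_comp_mem : ∀ {m : ℕ} {M N L : ModuleCat.{0} A} {f : M ⟶ N},
    f ∈ radPow C m M N → ∀ b : N ⟶ L, f ≫ b ∈ radPow C m M L
  | 0, _, _, _, _, _, _ => AddSubgroup.mem_top _
  | _ + 1, _, _, _, _, hf, b => by
    refine radPow_succ_induction (P := fun f => f ≫ b ∈ _) (fun L g h hg hh => ?_) ?_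
      (fun f f' hf hf' => ?_) (fun f hf => ?_) hf
    · simpa only [Category.assoc] using mem_radPow_succ_of hg (relRad_comp_mem hh b)
    · simpa only [Limits.zero_comp] using zero_mem _
    · simpa only [Preadditive.add_comp] using add_mem hf hf'
    · simpa only [Preadditive.neg_comp] using neg_mem hf

lemma comp_radPow_mem : ∀ {m : ℕ} {M N L : ModuleCat.{0} A} {f : M ⟶ N},
    f ∈ radPow C m M N → ∀ a : L ⟶ M, a ≫ f ∈ radPow C m L N
  | 0, _, _, _, _, _, _ => AddSubgroup.mem_top _
  | _ + 1, _, _, _, _, hf, a => by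
    refine radPow_succ_induction (P := fun f => a ≫ f ∈ _) (fun L g h hg hh => ?_) ?_
      (fun f f' hf hf' => ?_) (fun f hf => ?_) hf
    · simpa only [Category.assoc] using mem_radPow_succ_of (comp_radPow_mem hg a) hh
    · simpa only [Limits.comp_zero] using zero_mem _
    · simpa only [Preadditive.comp_add] using add_mem hf hf'
    · simpa only [Preadditive.comp_neg] using neg_mem hf

lemma relRad_comp_radPow_mem : ∀ {m : ℕ} {M N L : ModuleCat.{0} A} {a : M ⟶ N} {f : N ⟶ L},
    a ∈ relRad C M N → f ∈ radPow C m N L → a ≫ f ∈ radPow C (m + 1) M L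
  | 0, _, _, _, a, f, ha, _ => by
    simpa only [Category.id_comp] using
      mem_radPow_succ_of (show 𝟙 _ ∈ radPow C 0 _ _ from AddSubgroup.mem_top _)
        (relRad_comp_mem ha f)
  | _ + 1, _, _, _, a, _, ha, hf => by
    refine radPow_succ_induction (P := fun f => a ≫ f ∈ _) (fun L g h hg hh => ?_) ?_
      (fun f f' hf hf' => ?_) (fun f hf => ?_) hf
    · simpa only [Category.assoc] using mem_radPow_succ_of (relRad_comp_radPow_mem ha hg) hh
    · simpa only [Limits.comp_zero] using zero_mem _
    · simpa only [Preadditive.comp_add] using add_mem hf hf'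
    · simpa only [Preadditive.comp_neg] using neg_mem hf

lemma radPow_succ_le :
    ∀ (m : ℕ) (M N : ModuleCat.{0} A), radPow C (m + 1) M N ≤ radPow C m M N
  | 0, _, _ => le_top
  | m + 1, _, _ => (AddSubgroup.closure_le _).mpr <| by
    rintro _ ⟨L, g, h, hg, hh, rfl⟩
    exact mem_radPow_succ_of (radPow_succ_le m _ _ hg) hh

lemma radPow_antitone (M N : ModuleCat.{0} A) : Antitone fun m => radPow C m M N :=
  antitone_nat_of_succ_le fun m => radPow_succ_le m M N

lemma mem_radInf_iff {f : M ⟶ N} : f ∈ radInf C M N ↔ ∀ m, f ∈ radPow C m M N :=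
  ⟨fun hf m => radPow_antitone M N m.le_succ (AddSubgroup.mem_iInf.mp hf m),
    fun hf => AddSubgroup.mem_iInf.mpr fun m => hf (m + 1)⟩

lemma radPow_eq_bot_of_iso {m : ℕ} (e : N ≅ L) (h : radPow C m M L = ⊥) :
    radPow C m M N = ⊥ := by
  refine (AddSubgroup.eq_bot_iff_forall _).mpr fun f hf => ?_
  have hfe : f ≫ e.hom = 0 := by
    simpa only [h, AddSubgroup.mem_bot] using radPow_comp_mem hf e.hom
  exact Limits.zero_of_comp_mono e.hom hfe

end Radical

section Products

variable {M N M' N' : ModuleCat.{0} A}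

def prodFst (M N : ModuleCat.{0} A) : ModuleCat.of A (M × N) ⟶ M :=
  ModuleCat.ofHom (LinearMap.fst A M N)

def prodSnd (M N : ModuleCat.{0} A) : ModuleCat.of A (M × N) ⟶ N :=
  ModuleCat.ofHom (LinearMap.snd A M N)

def prodInl (M N : ModuleCat.{0} A) : M ⟶ ModuleCat.of A (M × N) :=
  ModuleCat.ofHom (LinearMap.inl A M N)

def prodInr (M N : ModuleCat.{0} A) : N ⟶ ModuleCat.of A (M × N) :=
  ModuleCat.ofHom (LinearMap.inr A M N)

def prodMap (f : M ⟶ M') (g : N ⟶ N') : ModuleCat.of A (M × N) ⟶ ModuleCat.of A (M' × N') :=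
  ModuleCat.ofHom (f.hom.prodMap g.hom)

lemma prodFst_inl_add_prodSnd_inr (M N : ModuleCat.{0} A) :
    prodFst M N ≫ prodInl M N + prodSnd M N ≫ prodInr M N = 𝟙 _ := by
  refine ModuleCat.hom_ext (LinearMap.ext fun x => ?_)
  simp [prodFst, prodSnd, prodInl, prodInr]

lemma prodMap_eq (f : M ⟶ M') (g : N ⟶ N') :
    prodMap f g = prodFst M N ≫ f ≫ prodInl M' N' + prodSnd M N ≫ g ≫ prodInr M' N' := by
  refine ModuleCat.hom_ext (LinearMap.ext fun x => ?_)
  simp [prodMap, prodFst, prodSnd, prodInl, prodInr]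

lemma epi_prodMap {f : M ⟶ M'} {g : N ⟶ N'} [Epi f] [Epi g] : Epi (prodMap f g) := by
  simp only [ModuleCat.epi_iff_surjective] at *
  exact Function.Surjective.prodMap ‹_› ‹_›

lemma mono_prodMap {f : M ⟶ M'} {g : N ⟶ N'} [Mono f] [Mono g] : Mono (prodMap f g) := by
  simp only [ModuleCat.mono_iff_injective] at *
  exact Function.Injective.prodMap ‹_› ‹_›

lemma prodMap_mem_radPow {C : Set (ModuleCat.{0} A)} {m : ℕ} {f : M ⟶ M'} {g : N ⟶ N'}
    (hf : f ∈ radPow C m M M') (hg : g ∈ radPow C m N N') :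
    prodMap f g ∈ radPow C m _ _ := by
  rw [prodMap_eq]
  exact add_mem (comp_radPow_mem (radPow_comp_mem hf _) _)
    (comp_radPow_mem (radPow_comp_mem hg _) _)

end Products

section AdditiveClosure

variable {C S : Set (ModuleCat.{0} A)} {m : ℕ}

lemma InAdd.exists_epi_mem_radPow
    (hS : ∀ D ∈ S, ∃ (Z : ModuleCat.{0} A) (f : Z ⟶ D), Epi f ∧ f ∈ radPow C m Z D)
    {Y : ModuleCat.{0} A} (hY : InAdd S Y) :
    ∃ (Z : ModuleCat.{0} A) (f : Z ⟶ Y), Epi f ∧ f ∈ radPow C m Z Y := by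
  induction hY with
  | base hD => exact hS _ hD
  | prod _ _ ihM ihN =>
    obtain ⟨Z₁, f₁, _, hf₁⟩ := ihM
    obtain ⟨Z₂, f₂, _, hf₂⟩ := ihN
    exact ⟨_, prodMap f₁ f₂, epi_prodMap, prodMap_mem_radPow hf₁ hf₂⟩
  | summand _ hDM ih =>
    obtain ⟨Z, f, _, hf⟩ := ih
    obtain ⟨i, r, hir⟩ := hDM
    have : IsSplitEpi r := .mk' ⟨i, hir⟩
    exact ⟨Z, f ≫ r, epi_comp f r, radPow_comp_mem hf r⟩

lemma InAdd.exists_mono_mem_radPow {T : Set (ModuleCat.{0} A)}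
    (hS : ∀ D ∈ S,
      ∃ (Z : ModuleCat.{0} A) (f : D ⟶ Z), InAdd T Z ∧ Mono f ∧ f ∈ radPow C m D Z)
    {Y : ModuleCat.{0} A} (hY : InAdd S Y) :
    ∃ (Z : ModuleCat.{0} A) (f : Y ⟶ Z), InAdd T Z ∧ Mono f ∧ f ∈ radPow C m Y Z := by
  induction hY with
  | base hD => exact hS _ hD
  | prod _ _ ihM ihN =>
    obtain ⟨Z₁, f₁, hZ₁, _, hf₁⟩ := ihM
    obtain ⟨Z₂, f₂, hZ₂, _, hf₂⟩ := ihN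
    exact ⟨_, prodMap f₁ f₂, hZ₁.prod hZ₂, mono_prodMap, prodMap_mem_radPow hf₁ hf₂⟩
  | summand _ hDM ih =>
    obtain ⟨Z, f, hZ, _, hf⟩ := ih
    obtain ⟨i, r, hir⟩ := hDM
    have : IsSplitMono i := .mk' ⟨r, hir⟩
    exact ⟨Z, i ≫ f, hZ, mono_comp i f, comp_radPow_mem hf i⟩

lemma InAdd.radPow_eq_bot {M Z : ModuleCat.{0} A} (h : ∀ D ∈ S, radPow C m M D = ⊥)
    (hZ : InAdd S Z) : radPow C m M Z = ⊥ := by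
  induction hZ with
  | base hD => exact h _ hD
  | @prod M₁ M₂ _ _ ih₁ ih₂ =>
    refine (AddSubgroup.eq_bot_iff_forall _).mpr fun c hc => ?_
    have h₁ : c ≫ prodFst M₁ M₂ = 0 := by
      simpa [ih₁] using radPow_comp_mem hc (prodFst M₁ M₂)
    have h₂ : c ≫ prodSnd M₁ M₂ = 0 := by
      simpa [ih₂] using radPow_comp_mem hc (prodSnd M₁ M₂)
    rw [← Category.comp_id c, ← prodFst_inl_add_prodSnd_inr, Preadditive.comp_add,
      reassoc_of% h₁, reassoc_of% h₂]
    simp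
  | summand _ hDM ih =>
    obtain ⟨i, r, hir⟩ := hDM
    refine (AddSubgroup.eq_bot_iff_forall _).mpr fun c hc => ?_
    have hci : c ≫ i = 0 := by simpa [ih] using radPow_comp_mem hc i
    rw [← Category.comp_id c, ← hir, reassoc_of% hci, Limits.zero_comp]

end AdditiveClosure

section Indecomposable

lemma indec_iff_isCompl (X : ModuleCat.{0} A) :
    Indec X ↔
      ¬ Subsingleton X ∧ ∀ p q : Submodule A X, IsCompl p q → p = ⊥ ∨ q = ⊥ := by
  refine ⟨fun hX => ⟨hX.1, fun p q hpq => ?_⟩, fun ⟨hX, h⟩ => ⟨hX, fun e he => ?_⟩⟩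
  · have hidem := Submodule.isIdempotentElem_projection hpq
    rcases hX.2 (ModuleCat.ofHom (p.projection q hpq)) (congrArg ModuleCat.ofHom hidem) with
      h0 | h1
    · left
      rw [← Submodule.range_projection hpq, show p.projection q hpq = 0 from congrArg (·.hom) h0,
        LinearMap.range_zero]
    · right
      rw [← Submodule.ker_projection hpq, show p.projection q hpq = LinearMap.id from
        congrArg (·.hom) h1, LinearMap.ker_id]
  · have hidem : IsIdempotentElem e.hom := congrArg ModuleCat.Hom.hom he
    rcases h _ _ (LinearMap.IsIdempotentElem.isCompl hidem) with h0 | h1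
    · exact .inl (ModuleCat.hom_ext (LinearMap.range_eq_bot.mp h0))
    · refine .inr (ModuleCat.hom_ext (LinearMap.ext fun x => ?_))
      have hx : e.hom x - x ∈ LinearMap.ker e.hom := by
        simp [LinearMap.mem_ker, ← Module.End.mul_apply, hidem.eq]
      simpa [h1, sub_eq_zero] using hx

variable [IsArtinianRing A] {X : ModuleCat.{0} A} [Module.Finite A X]

/-- Fitting's lemma: `X = ker fⁿ ⊕ range fⁿ` for large `n`, and indecomposability kills one
summand. -/
lemma Indec.isIso_or_isNilpotent (hX : Indec X) (f : X ⟶ X) : IsIso f ∨ IsNilpotent f.hom := by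
  obtain ⟨n, hcompl, hn⟩ :=
    (f.hom.eventually_isCompl_ker_pow_range_pow.and (Filter.eventually_gt_atTop 0)).exists
  rcases ((indec_iff_isCompl X).mp hX).2 _ _ hcompl with hker | hrange
  · left
    obtain ⟨n, rfl⟩ := Nat.exists_eq_succ_of_ne_zero hn.ne'
    have hinj : Function.Injective (f.hom ^ (n + 1)) := LinearMap.ker_eq_bot.mp hker
    rw [pow_succ, Module.End.coe_mul] at hinj
    exact (ConcreteCategory.isIso_iff_bijective f).mpr
      (IsArtinian.bijective_of_injective_endomorphism _ hinj.of_comp)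
  · exact .inr ⟨n, LinearMap.range_eq_bot.mp hrange⟩

lemma Indec.isIso_of_add_eq_id (hX : Indec X) {a b : X ⟶ X} (hab : a + b = 𝟙 X)
    (ha : ¬ IsIso a) : IsIso b := by
  have hb : b.hom = 1 - a.hom := by
    rw [eq_sub_iff_add_eq', ← ModuleCat.hom_add, hab, ModuleCat.hom_id, Module.End.one_eq_id]
  have hunit : IsUnit b.hom := hb ▸ ((hX.isIso_or_isNilpotent a).resolve_left ha).isUnit_one_sub
  exact (ConcreteCategory.isIso_iff_bijective b).mpr ((Module.End.isUnit_iff _).mp hunit)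

/-- Krull–Schmidt: `End X` is local, so one of the two halves of `𝟙 X = a + b` coming from
`M × N` is invertible, making `X` a summand of `M` or of `N`. -/
lemma InAdd.exists_iso_of_summand {S : Set (ModuleCat.{0} A)} (hS : ∀ D ∈ S, Indec D)
    {Y : ModuleCat.{0} A} (hY : InAdd S Y) (hX : Indec X) (hXY : Summand X Y) :
    ∃ D ∈ S, Nonempty (X ≅ D) := by
  induction hY with
  | base hD => exact ⟨_, hD, hX.nonempty_iso_of_summand (hS _ hD) hXY⟩
  | @prod M N _ _ ihM ihN =>
    obtain ⟨i, r, hir⟩ := hXY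
    have hab :
        (i ≫ prodFst M N) ≫ (prodInl M N ≫ r) + (i ≫ prodSnd M N) ≫ (prodInr M N ≫ r) = 𝟙 X := by
      simpa [Preadditive.comp_add, Preadditive.add_comp, hir] using
        congrArg (fun φ => i ≫ φ ≫ r) (prodFst_inl_add_prodSnd_inr M N)
    by_cases ha : IsIso ((i ≫ prodFst M N) ≫ (prodInl M N ≫ r))
    · exact ihM (.of_isIso_comp (i ≫ prodFst M N) (prodInl M N ≫ r))
    · have := hX.isIso_of_add_eq_id hab ha
      exact ihN (.of_isIso_comp (i ≫ prodSnd M N) (prodInr M N ≫ r))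
  | summand _ hDM ih => exact ih (hXY.trans hDM)

lemma InAdd.not_summand_of_summand {S : Set (ModuleCat.{0} A)} (hS : ∀ D ∈ S, Indec D)
    {Y : ModuleCat.{0} A} (hY : InAdd S Y) (hX : Indec X) (hXS : ∀ D ∈ S, ¬ Summand D X)
    {W : ModuleCat.{0} A} (hW : Indec W) (hWX : Summand W X) : ¬ Summand W Y := fun hWY =>
  let ⟨D, hD, ⟨e⟩⟩ := hY.exists_iso_of_summand hS hX (hX.summand_of_common_summand hW hWX hWY)
  hXS D hD (.of_iso e.symm)

end Indecomposable

section Resolving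

variable {C : Set (ModuleCat.{0} A)}

lemma subsingleton_mem_FDelta {n : ℕ} (Δ : Fin n → ModuleCat.{0} A) (X : ModuleCat.{0} A)
    [Subsingleton X] : X ∈ FDelta Δ := by
  have htop : (⊥ : Submodule A X) = ⊤ := Subsingleton.elim _ _
  exact ⟨⟨∅, by rw [Finset.coe_empty, Submodule.span_empty, htop]⟩,
    0, fun _ => ⊥, monotone_const, rfl, htop, fun i => i.elim0⟩

lemma Resolving.prod_mem (hC : Resolving C) {M N : ModuleCat.{0} A} (hM : M ∈ C) (hN : N ∈ C) :
    ModuleCat.of A (M × N) ∈ C := by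
  refine hC.2.1 M _ N (prodInl M N) (prodSnd M N) ?_ ?_ ?_ hM hN
  · exact (ModuleCat.mono_iff_injective _).mpr LinearMap.inl_injective
  · exact (ModuleCat.epi_iff_surjective _).mpr LinearMap.snd_surjective
  · exact Function.Exact.inl_snd

lemma Resolving.mem_of_iso (hC : Resolving C)
    (h0 : ∀ X : ModuleCat.{0} A, Subsingleton X → X ∈ C)
    {X Y : ModuleCat.{0} A} (e : X ≅ Y) (hX : X ∈ C) : Y ∈ C := by
  refine hC.2.1 X Y (ModuleCat.of A PUnit) e.hom 0 inferInstance ?_ ?_ hX (h0 _ inferInstance)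
  · exact (ModuleCat.epi_iff_surjective _).mpr fun _ => ⟨0, Subsingleton.elim _ _⟩
  · exact fun y => iff_of_true (Subsingleton.elim _ _) ⟨e.inv y, by simp⟩

/-- Induction on length: a decomposable projective splits into two proper projective summands. -/
lemma Resolving.of_projective [IsArtinianRing A] (hC : Resolving C)
    (h0 : ∀ X : ModuleCat.{0} A, Subsingleton X → X ∈ C) (X : Type) [AddCommGroup X]
    [Module A X] [Module.Finite A X] [Module.Projective A X] : ModuleCat.of A X ∈ C := by
  suffices ∀ l : ℕ∞, ∀ (X : Type) [AddCommGroup X] [Module A X] [Module.Finite A X]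
      [Module.Projective A X], Module.length A X = l → ModuleCat.of A X ∈ C from this _ X rfl
  intro l
  induction l using WellFoundedLT.induction with
  | _ l ih =>
  intro X _ _ _ _ hl
  by_cases hs : Subsingleton X
  · exact h0 _ hs
  by_cases hind : ∀ p q : Submodule A X, IsCompl p q → p = ⊥ ∨ q = ⊥
  · exact hC.1 _ ‹_› ((IsProjective.iff_projective X).mp ‹_›)
      ((indec_iff_isCompl (ModuleCat.of A X)).mpr ⟨hs, hind⟩)
  push Not at hind
  obtain ⟨p, q, hpq, hp, hq⟩ := hind
  have : Module.Projective A p :=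
    .of_split p.subtype (p.projectionOnto q hpq) (LinearMap.ext (p.projectionOnto_apply_left hpq))
  have : Module.Projective A q := .of_split q.subtype (q.projectionOnto p hpq.symm)
    (LinearMap.ext (q.projectionOnto_apply_left hpq.symm))
  have hp_ne : p ≠ ⊤ := fun h => hq (top_disjoint.mp (h ▸ hpq.disjoint))
  have hq_ne : q ≠ ⊤ := fun h => hp (disjoint_top.mp (h ▸ hpq.disjoint))
  have hp' := ih _ (hl ▸ Submodule.length_lt hp_ne) p rfl
  have hq' := ih _ (hl ▸ Submodule.length_lt hq_ne) q rfl
  exact hC.mem_of_iso h0 (Submodule.prodEquivOfIsCompl p q hpq).toModuleIso (hC.prod_mem hp' hq')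

lemma Resolving.exists_projective_epi [IsArtinianRing A] (hC : Resolving C)
    (h0 : ∀ X : ModuleCat.{0} A, Subsingleton X → X ∈ C) (M : ModuleCat.{0} A)
    [Module.Finite A M] :
    ∃ (P : ModuleCat.{0} A) (π : P ⟶ M), P ∈ C ∧ Projective P ∧ Epi π := by
  obtain ⟨r, f, hf⟩ := Module.Finite.exists_fin' A M
  exact ⟨ModuleCat.of A (Fin r → A), ModuleCat.ofHom f, hC.of_projective h0 (Fin r → A),
    (IsProjective.iff_projective _).mp inferInstance, (ModuleCat.epi_iff_surjective _).mpr hf⟩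

end Resolving

section Partitions

variable {C : Set (ModuleCat.{0} A)} {X Y : ModuleCat.{0} A}

lemma SplitProjIn.of_iso (e : X ≅ Y) (hX : SplitProjIn C X) : SplitProjIn C Y := by
  intro M hM f _
  obtain ⟨s, hs⟩ := hX M hM (f ≫ e.inv) inferInstance
  exact ⟨e.inv ≫ s, by rw [← cancel_mono e.inv]; simp [hs]⟩

lemma SplitInjIn.of_iso (e : X ≅ Y) (hX : SplitInjIn C X) : SplitInjIn C Y := by
  intro M hM f _
  obtain ⟨r, hr⟩ := hX M hM (e.hom ≫ f) inferInstance
  rw [Category.assoc] at hr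
  exact ⟨r ≫ e.hom, by rw [← cancel_epi e.hom]; simp [reassoc_of% hr]⟩

lemma pRest_subset (C : Set (ModuleCat.{0} A)) : ∀ m, pRest C m ⊆ C
  | 0 => le_rfl
  | m + 1 => fun _ hM => pRest_subset C m hM.1

lemma iRest_subset (C : Set (ModuleCat.{0} A)) : ∀ m, iRest C m ⊆ C
  | 0 => le_rfl
  | m + 1 => fun _ hM => iRest_subset C m hM.1

lemma mem_pRest_of_mem_Pinf (hX : X ∈ Pinf C) : ∀ m, X ∈ pRest C m
  | 0 => hX.1
  | m + 1 => ⟨mem_pRest_of_mem_Pinf hX m, fun D hD hDX => by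
      obtain ⟨e⟩ := hD.2.1.nonempty_iso_of_summand hX.2.1 hDX
      exact hX.2.2 m ⟨mem_pRest_of_mem_Pinf hX m, hX.2.1, hD.2.2.of_iso e⟩⟩

lemma mem_iRest_of_mem_Iinf (hX : X ∈ Iinf C) : ∀ m, X ∈ iRest C m
  | 0 => hX.1
  | m + 1 => ⟨mem_iRest_of_mem_Iinf hX m, fun D hD hDX => by
      obtain ⟨e⟩ := hD.2.1.nonempty_iso_of_summand hX.2.1 hDX
      exact hX.2.2 m ⟨mem_iRest_of_mem_Iinf hX m, hX.2.1, hD.2.2.of_iso e⟩⟩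

variable [IsArtinianRing A]

/-- The cover of `D ∈ pRest C (m + 1)` by `add (Ppart C m)` is radical since the indecomposable
`D` shares no summand with it; covering its summands by induction adds `m` radical factors. -/
lemma exists_epi_mem_radPow_of_mem_pRest (hfin : ∀ X ∈ C, Module.Finite A X)
    (hcovers : ∀ m, IsCover (Ppart C m) (pRest C m)) :
    ∀ m {D : ModuleCat.{0} A}, D ∈ pRest C m → Indec D →
      ∃ (Z : ModuleCat.{0} A) (f : Z ⟶ D), Epi f ∧ f ∈ radPow C m Z D
  | 0, D, _, _ => ⟨D, 𝟙 D, inferInstance, AddSubgroup.mem_top _⟩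
  | m + 1, D, hD, hDind => by
    obtain ⟨Y, hY, f, _⟩ := hcovers m D hD.1
    have : Module.Finite A D := hfin D (pRest_subset C _ hD)
    have hf : f ∈ relRad C Y D := mem_relRad_of_forall_summand f fun X hX hXY hXD =>
      hY.not_summand_of_summand (fun _ h => h.2.1) hDind hD.2 hX hXD hXY
    obtain ⟨Z, u, _, hu⟩ := hY.exists_epi_mem_radPow fun D' hD' =>
      exists_epi_mem_radPow_of_mem_pRest hfin hcovers m hD'.1 hD'.2.1
    exact ⟨Z, u ≫ f, epi_comp u f, mem_radPow_succ_of hu hf⟩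

lemma exists_mono_mem_radPow_of_mem_iRest (hfin : ∀ X ∈ C, Module.Finite A X)
    (hcocovers : ∀ m, IsCocover (Ipart C m) (iRest C m)) :
    ∀ m {D : ModuleCat.{0} A}, D ∈ iRest C m → Indec D →
      ∃ (Z : ModuleCat.{0} A) (g : D ⟶ Z),
        InAdd (Ipart C 0) Z ∧ Mono g ∧ g ∈ radPow C m D Z
  | 0, D, hD, _ =>
    let ⟨Z, hZ, g, hg⟩ := hcocovers 0 D hD
    ⟨Z, g, hZ, hg, AddSubgroup.mem_top _⟩
  | m + 1, D, hD, hDind => by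
    obtain ⟨Y, hY, g, _⟩ := hcocovers m D hD.1
    have : Module.Finite A D := hfin D (iRest_subset C _ hD)
    have hg : g ∈ relRad C D Y := mem_relRad_of_forall_summand g fun X hX hXD hXY =>
      hY.not_summand_of_summand (fun _ h => h.2.1) hDind hD.2 hX hXD hXY
    obtain ⟨Z, v, hZ, _, hv⟩ := hY.exists_mono_mem_radPow fun D' hD' =>
      exists_mono_mem_radPow_of_mem_iRest hfin hcocovers m hD'.1 hD'.2.1
    exact ⟨Z, g ≫ v, hZ, mono_comp g v, relRad_comp_radPow_mem hg hv⟩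

lemma mem_radInf_of_mem_Pinf (hfin : ∀ X ∈ C, Module.Finite A X)
    (hcovers : ∀ m, IsCover (Ppart C m) (pRest C m))
    {P M : ModuleCat.{0} A}
    [Projective P] (π : P ⟶ M) (hM : M ∈ Pinf C) : π ∈ radInf C P M := by
  refine mem_radInf_iff.mpr fun m => ?_
  obtain ⟨Z, f, _, hf⟩ :=
    exists_epi_mem_radPow_of_mem_pRest hfin hcovers m (mem_pRest_of_mem_Pinf hM m) hM.2.1
  rw [← Projective.factorThru_comp π f]
  exact comp_radPow_mem hf _

end Partitions

section Stabilization

open scoped ModuleCat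

/-- `radPow C m M N` is a `k`-subspace since `c • f = f ≫ c • 𝟙 N`. -/
def radPowSubmodule (k : Type) [Field k] [Algebra k A] (C : Set (ModuleCat.{0} A)) (m : ℕ)
    (M N : ModuleCat.{0} A) : Submodule k (M ⟶ N) where
  toAddSubmonoid := (radPow C m M N).toAddSubmonoid
  smul_mem' c f (hf : f ∈ radPow C m M N) := by
    show c • f ∈ radPow C m M N
    simpa only [Linear.comp_smul, Category.comp_id] using radPow_comp_mem (m := m) hf (c • 𝟙 N)

/-- `Hom(M, N)` is finite-dimensional over `k`, so its descending radical filtration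
stabilizes. -/
lemma exists_radPow_le_radInf (k : Type) [Field k] [Algebra k A] [FiniteDimensional k A]
    (C : Set (ModuleCat.{0} A)) (M N : ModuleCat.{0} A) [Module.Finite A M] [Module.Finite A N] :
    ∃ m, radPow C m M N ≤ radInf C M N := by
  have : Module.Finite k M := .trans A M
  have : Module.Finite k N := .trans A N
  have : FiniteDimensional k (M ⟶ N) := Module.Finite.of_injective
    (LinearMap.restrictScalarsₗ k A M N k ∘ₗ (ModuleCat.homLinearEquiv (S := k)).toLinearMap)
    ((LinearMap.restrictScalars_injective k).comp (ModuleCat.homLinearEquiv (S := k)).injective)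
  obtain ⟨m₀, hm₀⟩ := IsArtinian.monotone_stabilizes
    ⟨fun m => OrderDual.toDual (radPowSubmodule k C m M N), fun _ _ h =>
      radPow_antitone (C := C) M N h⟩
  refine ⟨m₀, fun f hf => mem_radInf_iff.mpr fun m => ?_⟩
  have hstab : radPowSubmodule k C m₀ M N = radPowSubmodule k C (max m₀ m) M N :=
    hm₀ _ (le_max_left _ _)
  have hf' : f ∈ radPowSubmodule k C (max m₀ m) M N := hstab ▸ hf
  exact radPow_antitone M N (le_max_right m₀ m) hf'

end Stabilization

lemma exists_radPow_eq_bot_of_finRep {C S : Set (ModuleCat.{0} A)} {M : ModuleCat.{0} A}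
    (hS : FinRep S) (h : ∀ D ∈ S, ∃ m, radPow C m M D = ⊥) :
    ∃ m, ∀ D ∈ S, radPow C m M D = ⊥ := by
  obtain ⟨ι, _, rep, hrep⟩ := hS
  have hbound : ∀ i, ∃ m, ∀ D ∈ S, Nonempty (D ≅ rep i) → radPow C m M D = ⊥ := by
    intro i
    by_cases hi : ∃ D₀ ∈ S, Nonempty (D₀ ≅ rep i)
    · obtain ⟨D₀, hD₀, ⟨e₀⟩⟩ := hi
      obtain ⟨m, hm⟩ := h D₀ hD₀
      exact ⟨m, fun D _ ⟨e⟩ => radPow_eq_bot_of_iso (e ≪≫ e₀.symm) hm⟩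
    · exact ⟨0, fun D hD he => (hi ⟨D, hD, he⟩).elim⟩
  choose m hm using hbound
  obtain ⟨B, hB⟩ := (Set.finite_range m).bddAbove
  refine ⟨B, fun D hD => ?_⟩
  obtain ⟨i, he⟩ := hrep D hD
  exact le_bot_iff.mp ((radPow_antitone M D (hB ⟨i, rfl⟩)).trans (hm i D hD he).le)

theorem stmt9_general {k : Type} [Field k]
    {A : Type} [Ring A] [Algebra k A] [FiniteDimensional k A]
    {n : ℕ} (Δ : Fin n → ModuleCat.{0} A)
    (hres : Resolving (FDelta Δ))
    (hcovers : ∀ m : ℕ, IsCover (Ppart (FDelta Δ) m) (pRest (FDelta Δ) m))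
    (hcocovers : ∀ m : ℕ, IsCocover (Ipart (FDelta Δ) m) (iRest (FDelta Δ) m))
    (hI0fin : FinRep (Ipart (FDelta Δ) 0))
    (hZeng : ¬ FinRep {M | M ∈ FDelta Δ ∧ Indec M} →
      ∃ M : ModuleCat.{0} A, M ∈ Pinf (FDelta Δ) ∧ M ∈ Iinf (FDelta Δ))
    (hrad : ∀ (M N L : ModuleCat.{0} A) (f : M ⟶ N) (g : N ⟶ L),
      M ∈ FDelta Δ → N ∈ FDelta Δ → L ∈ FDelta Δ →
      f ∈ radInf (FDelta Δ) M N → g ∈ radInf (FDelta Δ) N L → f ≫ g = 0) :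
    FinRep {M | M ∈ FDelta Δ ∧ Indec M} := by
  have : IsArtinianRing A := .of_finite k A
  have hfin : ∀ X ∈ FDelta Δ, Module.Finite A X := fun X hX => hX.1
  by_contra hinf
  obtain ⟨M, hMP, hMI⟩ := hZeng hinf
  have : Module.Finite A M := hMP.1.1
  obtain ⟨P, π, hP, _, _⟩ :=
    hres.exists_projective_epi (fun X _ => subsingleton_mem_FDelta Δ X) M
  have hπ := mem_radInf_of_mem_Pinf hfin hcovers π hMP
  have hinf_bot : ∀ D ∈ FDelta Δ, ∀ g ∈ radInf (FDelta Δ) M D, g = 0 := fun D hD g hg =>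
    Limits.zero_of_epi_comp π (hrad _ _ _ π g hP hMP.1 hD hπ hg)
  obtain ⟨m, hm⟩ := exists_radPow_eq_bot_of_finRep hI0fin fun D hD => by
    have : Module.Finite A D := hD.1.1
    obtain ⟨m, hm⟩ := exists_radPow_le_radInf k (FDelta Δ) M D
    exact ⟨m, (AddSubgroup.eq_bot_iff_forall _).mpr fun g hg => hinf_bot D hD.1 g (hm hg)⟩
  obtain ⟨Z, g, hZ, hg, hgm⟩ :=
    exists_mono_mem_radPow_of_mem_iRest hfin hcocovers m (mem_iRest_of_mem_Iinf hMI m) hMI.2.1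
  rw [hZ.radPow_eq_bot hm, AddSubgroup.mem_bot] at hgm
  exact hMI.2.1.not_mono_zero (hgm ▸ hg)

/-- for a finite-dimensional quasi-hereditary algebra over an infinite
perfect field, if (rad_Δ^∞)² = 0 on ℱ(Δ) then ℱ(Δ) has finitely many indecomposables
up to isomorphism.  (Zeng's theorem is assumed, as permitted.) -/
theorem stmt9 {k : Type} [Field k] [Infinite k] [PerfectField k]
    {A : Type} [Ring A] [Algebra k A] [FiniteDimensional k A]
    {n : ℕ} (Δ : Fin n → ModuleCat.{0} A)
    (hres : Resolving (FDelta Δ)) (hcov : CovariantlyFinite (FDelta Δ))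
    (hcontra : ContravariantlyFinite (FDelta Δ))
    (hcovers : ∀ m : ℕ, IsCover (Ppart (FDelta Δ) m) (pRest (FDelta Δ) m))
    (hcocovers : ∀ m : ℕ, IsCocover (Ipart (FDelta Δ) m) (iRest (FDelta Δ) m))
    (hI0fin : FinRep (Ipart (FDelta Δ) 0))
    (hZeng : ¬ FinRep {M | M ∈ FDelta Δ ∧ Indec M} →
      ∃ M : ModuleCat.{0} A, M ∈ Pinf (FDelta Δ) ∧ M ∈ Iinf (FDelta Δ))
    (hrad : ∀ (M N L : ModuleCat.{0} A) (f : M ⟶ N) (g : N ⟶ L),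
      M ∈ FDelta Δ → N ∈ FDelta Δ → L ∈ FDelta Δ →
      f ∈ radInf (FDelta Δ) M N → g ∈ radInf (FDelta Δ) N L → f ≫ g = 0) :
    FinRep {M | M ∈ FDelta Δ ∧ Indec M} :=
  stmt9_general (k := k) Δ hres hcovers hcocovers hI0fin hZeng hrad
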